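/- Let $\phi : X^m \to \mathbb{R}$ be a measurable function of $m$ independent random variables such that for every coordinate $i$ and all values, $|\phi(x_1,\ldots,x_i,\ldots,x_m) - \phi(x_1,\ldots,x_i',\ldots,x_m)| \le c_i$ with $\sum_{i=1}^m c_i^2 \le v$. Then for every $t \ge 0$, $\Pr[\phi(X_1,\ldots,X_m) - \mathrm{E}[\phi(X_1,\ldots,X_m)] \ge t] \le e^{-t^2/(2v)}$. -/

import Mathlib

/-! Integrating out the first coordinate with `g y = ∫ φ (Fin.cons z y) dμ₀(z)`, the centred
variable splits as `φ - 𝔼φ = (φ - g) + (g - 𝔼g)`. For each fixed `y` the first summand is centred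
and confined to an interval of length `2 c₀`, hence sub-Gaussian with parameter `c₀²` by
Hoeffding's lemma; `g` has bounded differences `c₁, …, c_{m-1}`, so by induction the second
summand is sub-Gaussian with parameter `∑_{i ≥ 1} cᵢ²`. Fubini multiplies the two bounds on the
moment generating function, and the Chernoff bound for the parameter `∑ cᵢ² ≤ v` gives the tail
estimate. -/

open MeasureTheory ProbabilityTheory Real NNReal

section Oscillation

variable {α : Type*} [MeasurableSpace α] {μ : Measure α} {f : α → ℝ} {C : ℝ}

lemma integrable_of_abs_sub_le [IsFiniteMeasure μ] (hf : AEStronglyMeasurable f μ)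
    (h : ∀ x y, |f x - f y| ≤ C) : Integrable f μ := by
  rcases isEmpty_or_nonempty α with hα | ⟨⟨x₀⟩⟩
  · exact .of_isEmpty
  refine .of_bound hf (|f x₀| + C) (ae_of_all _ fun x => ?_)
  rw [Real.norm_eq_abs]
  linarith [abs_sub_abs_le_abs_sub (f x) (f x₀), h x x₀]

lemma abs_integral_le_of_abs_le [IsProbabilityMeasure μ] (h : ∀ x, |f x| ≤ C) :
    |∫ x, f x ∂μ| ≤ C := by
  simpa using norm_integral_le_of_norm_le_const (μ := μ)
    (ae_of_all μ fun x => (Real.norm_eq_abs (f x)).trans_le (h x))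

lemma abs_sub_integral_le_of_abs_sub_le [IsProbabilityMeasure μ] {x : α} (hf : Integrable f μ)
    (h : ∀ y, |f x - f y| ≤ C) : |f x - ∫ y, f y ∂μ| ≤ C := by
  have hfx : f x - ∫ y, f y ∂μ = ∫ y, (f x - f y) ∂μ := by
    rw [integral_sub (integrable_const (f x)) hf, integral_const, probReal_univ, one_smul]
  rw [hfx]
  exact abs_integral_le_of_abs_le h

end Oscillation

namespace ProbabilityTheory.HasSubgaussianMGF

variable {Ω : Type*} [MeasurableSpace Ω] {μ : Measure Ω} {Y : Ω → ℝ} {c c' : ℝ≥0}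

lemma mono (h : HasSubgaussianMGF Y c μ) (hc : c ≤ c') : HasSubgaussianMGF Y c' μ where
  integrable_exp_mul := h.integrable_exp_mul
  mgf_le t := (h.mgf_le t).trans (by gcongr)

lemma map {Ω' : Type*} [MeasurableSpace Ω'] {ν : Measure Ω'} {f : Ω' → Ω} (hf : AEMeasurable f ν)
    (hY : AEMeasurable Y (ν.map f)) (h : HasSubgaussianMGF (Y ∘ f) c ν) :
    HasSubgaussianMGF Y c (ν.map f) where
  integrable_exp_mul t := by
    rw [integrable_map_measure (by fun_prop) hf]
    exact h.integrable_exp_mul t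
  mgf_le t := by
    rw [mgf_map hf (by fun_prop)]
    exact h.mgf_le t

section Prod

variable {α β : Type*} [MeasurableSpace α] [MeasurableSpace β] {μ : Measure α} {ν : Measure β}
  [SFinite μ] [SFinite ν]

lemma add_prod {W : α × β → ℝ} {Y : β → ℝ} {c₁ c₂ : ℝ≥0} (hW : AEMeasurable W (μ.prod ν))
    (hWY : ∀ y, HasSubgaussianMGF (fun x => W (x, y)) c₁ μ) (hY : HasSubgaussianMGF Y c₂ ν) :
    HasSubgaussianMGF (fun p => W p + Y p.2) (c₁ + c₂) (μ.prod ν) := by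
  have hsplit : ∀ t p, exp (t * (W p + Y p.2)) = exp (t * Y p.2) * exp (t * W p) := by
    intro t p
    rw [← exp_add]
    ring_nf
  have hsection : ∀ t y, ∫ x, exp (t * (W (x, y) + Y y)) ∂μ
      = exp (t * Y y) * mgf (fun x => W (x, y)) μ t := by
    intro t y
    simp_rw [hsplit, mgf]
    exact integral_const_mul _ _
  have hmeas : ∀ t, AEStronglyMeasurable (fun p => exp (t * (W p + Y p.2))) (μ.prod ν) := by
    intro t
    have hY' := hY.aemeasurable.comp_snd (μ := μ)
    exact (measurable_exp.comp_aemeasurable ((hW.add hY').const_mul t)).aestronglyMeasurable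
  have hbound : ∀ t y, exp (t * Y y) * mgf (fun x => W (x, y)) μ t
      ≤ exp (t * Y y) * exp (c₁ * t ^ 2 / 2) :=
    fun t y => mul_le_mul_of_nonneg_left ((hWY y).mgf_le t) (exp_pos _).le
  have hint : ∀ t, Integrable (fun p => exp (t * (W p + Y p.2))) (μ.prod ν) := by
    intro t
    refine (integrable_prod_iff' (hmeas t)).2 ⟨ae_of_all _ fun y => ?_, ?_⟩
    · simp_rw [hsplit]
      exact ((hWY y).integrable_exp_mul t).const_mul _
    · refine ((hY.integrable_exp_mul t).mul_const (exp (c₁ * t ^ 2 / 2))).mono'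
        (hmeas t).norm.prod_swap.integral_prod_right' (ae_of_all _ fun y => ?_)
      simp_rw [Real.norm_eq_abs, abs_of_pos (exp_pos _), hsection,
        abs_of_nonneg (mul_nonneg (exp_pos _).le mgf_nonneg)]
      exact hbound t y
  refine ⟨hint, fun t => ?_⟩
  calc mgf (fun p => W p + Y p.2) (μ.prod ν) t
      = ∫ y, exp (t * Y y) * mgf (fun x => W (x, y)) μ t ∂ν := by
        rw [mgf, integral_prod_symm _ (hint t)]
        simp_rw [hsection]
    _ ≤ ∫ y, exp (t * Y y) * exp (c₁ * t ^ 2 / 2) ∂ν := by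
        refine integral_mono_of_nonneg (ae_of_all _ fun y => ?_)
          ((hY.integrable_exp_mul t).mul_const _) (ae_of_all _ (hbound t))
        exact mul_nonneg (exp_pos _).le mgf_nonneg
    _ = mgf Y ν t * exp (c₁ * t ^ 2 / 2) := integral_mul_const _ _
    _ ≤ exp (c₂ * t ^ 2 / 2) * exp (c₁ * t ^ 2 / 2) := by gcongr; exact hY.mgf_le t
    _ = exp (↑(c₁ + c₂) * t ^ 2 / 2) := by
        rw [← exp_add, NNReal.coe_add]
        ring_nf

end Prod

end ProbabilityTheory.HasSubgaussianMGF

section FinCons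

variable {n : ℕ} {X : Fin (n + 1) → Type*} [∀ i, MeasurableSpace (X i)]

lemma measurable_finCons :
    Measurable fun p : X 0 × (∀ i : Fin n, X i.succ) => (Fin.cons p.1 p.2 : ∀ i, X i) := by
  refine measurable_pi_iff.2 fun i => ?_
  induction i using Fin.cases with
  | zero => exact measurable_fst
  | succ i => exact (measurable_pi_apply i).comp measurable_snd

lemma measurePreserving_finCons (μ : ∀ i, Measure (X i)) [∀ i, SigmaFinite (μ i)] :
    MeasurePreserving (fun p : X 0 × (∀ i : Fin n, X i.succ) => (Fin.cons p.1 p.2 : ∀ i, X i))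
      ((μ 0).prod (Measure.pi fun i : Fin n => μ i.succ)) (Measure.pi μ) := by
  refine ⟨measurable_finCons, (Measure.pi_eq fun s hs => ?_).symm⟩
  have hpre : (fun p : X 0 × (∀ i : Fin n, X i.succ) => (Fin.cons p.1 p.2 : ∀ i, X i)) ⁻¹'
      Set.univ.pi s = s 0 ×ˢ Set.univ.pi fun i : Fin n => s i.succ := by
    ext ⟨z, y⟩
    simp [Fin.forall_fin_succ]
  rw [Measure.map_apply measurable_finCons (.univ_pi hs), hpre, Measure.prod_prod,
    Measure.pi_pi, Fin.prod_univ_succ]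

lemma integral_pi_eq_integral_integral_finCons {E : Type*} [NormedAddCommGroup E]
    [NormedSpace ℝ E] (μ : ∀ i, Measure (X i)) [∀ i, SigmaFinite (μ i)] {f : (∀ i, X i) → E}
    (hf : Integrable f (Measure.pi μ)) :
    ∫ x, f x ∂Measure.pi μ
      = ∫ y, ∫ z, f (Fin.cons z y) ∂μ 0 ∂Measure.pi fun i : Fin n => μ i.succ := by
  have hcons := measurePreserving_finCons μ
  rw [← hcons.map_eq] at hf ⊢
  rw [integral_map hcons.measurable.aemeasurable hf.aestronglyMeasurable]
  exact integral_prod_symm _ (hf.comp_measurable hcons.measurable)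

end FinCons

def HasBoundedDifferences {ι : Type*} [DecidableEq ι] {X : ι → Type*} (φ : (∀ i, X i) → ℝ)
    (c : ι → ℝ) : Prop :=
  ∀ (x : ∀ i, X i) (i : ι) (x' : X i), |φ x - φ (Function.update x i x')| ≤ c i

namespace HasBoundedDifferences

section Fintype

variable {ι : Type*} [DecidableEq ι] {X : ι → Type*} {φ : (∀ i, X i) → ℝ} {c : ι → ℝ}

lemma abs_sub_le_sum [Fintype ι] (h : HasBoundedDifferences φ c) (x y : ∀ i, X i) :
    |φ x - φ y| ≤ ∑ i, c i := by
  suffices ∀ s : Finset ι, |φ x - φ (s.piecewise y x)| ≤ ∑ i ∈ s, c i by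
    simpa using this Finset.univ
  intro s
  induction s using Finset.induction_on with
  | empty => simp
  | insert j s hj ih =>
    rw [Finset.piecewise_insert, Finset.sum_insert hj]
    calc |φ x - φ (Function.update (s.piecewise y x) j (y j))|
        ≤ |φ x - φ (s.piecewise y x)| + |φ (s.piecewise y x)
            - φ (Function.update (s.piecewise y x) j (y j))| := abs_sub_le _ _ _
      _ ≤ ∑ i ∈ s, c i + c j := add_le_add ih (h _ j (y j))
      _ = c j + ∑ i ∈ s, c i := add_comm _ _

lemma integrable [Fintype ι] [∀ i, MeasurableSpace (X i)] {μ : Measure (∀ i, X i)}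
    [IsFiniteMeasure μ] (h : HasBoundedDifferences φ c) (hφ : AEStronglyMeasurable φ μ) :
    Integrable φ μ :=
  integrable_of_abs_sub_le hφ h.abs_sub_le_sum

end Fintype

section FinCons

variable {n : ℕ} {X : Fin (n + 1) → Type*} {φ : (∀ i, X i) → ℝ} {c : Fin (n + 1) → ℝ}

lemma abs_cons_sub_cons_le (h : HasBoundedDifferences φ c) (y : ∀ i : Fin n, X i.succ)
    (z z' : X 0) : |φ (Fin.cons z y) - φ (Fin.cons z' y)| ≤ c 0 := by
  simpa only [Fin.update_cons_zero] using h (Fin.cons z y) 0 z'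

variable [∀ i, MeasurableSpace (X i)] {μ : Measure (X 0)}

lemma integrable_cons [IsFiniteMeasure μ] (h : HasBoundedDifferences φ c) (hφ : Measurable φ)
    (y : ∀ i : Fin n, X i.succ) : Integrable (fun z => φ (Fin.cons z y)) μ :=
  have hsection : Measurable fun z => φ (Fin.cons z y) :=
    hφ.comp (measurable_finCons.comp (measurable_id.prodMk measurable_const))
  integrable_of_abs_sub_le hsection.aestronglyMeasurable (h.abs_cons_sub_cons_le y)

variable [IsProbabilityMeasure μ]

lemma integral_cons (h : HasBoundedDifferences φ c) (hφ : Measurable φ) :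
    HasBoundedDifferences (fun y : ∀ i : Fin n, X i.succ => ∫ z, φ (Fin.cons z y) ∂μ)
      (fun i => c i.succ) := by
  intro y i x'
  rw [← integral_sub (h.integrable_cons hφ y) (h.integrable_cons hφ _)]
  refine abs_integral_le_of_abs_le fun z => ?_
  rw [Fin.cons_update]
  exact h _ _ _

lemma hasSubgaussianMGF_cons_sub_integral (h : HasBoundedDifferences φ c) (hφ : Measurable φ)
    (y : ∀ i : Fin n, X i.succ) :
    HasSubgaussianMGF (fun z => φ (Fin.cons z y) - ∫ z', φ (Fin.cons z' y) ∂μ)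
      (‖c 0‖₊ ^ 2) μ := by
  have hint := h.integrable_cons hφ y (μ := μ)
  have hmem : ∀ z, φ (Fin.cons z y) ∈
      Set.Icc (∫ z', φ (Fin.cons z' y) ∂μ - c 0) (∫ z', φ (Fin.cons z' y) ∂μ + c 0) := by
    intro z
    obtain ⟨hlo, hhi⟩ :=
      abs_le.1 (abs_sub_integral_le_of_abs_sub_le hint (h.abs_cons_sub_cons_le y z))
    exact ⟨by linarith, by linarith⟩
  convert hasSubgaussianMGF_of_mem_Icc hint.aemeasurable (ae_of_all _ hmem) using 2
  rw [add_sub_sub_cancel, ← two_mul, nnnorm_mul, nnnorm_two, mul_div_cancel_left₀ _ two_ne_zero]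

end FinCons

end HasBoundedDifferences

theorem hasSubgaussianMGF_sub_integral_pi {n : ℕ} {X : Fin n → Type*}
    [∀ i, MeasurableSpace (X i)] (μ : ∀ i, Measure (X i)) [∀ i, IsProbabilityMeasure (μ i)]
    {φ : (∀ i, X i) → ℝ} {c : Fin n → ℝ} (hφ : Measurable φ) (h : HasBoundedDifferences φ c) :
    HasSubgaussianMGF (fun x => φ x - ∫ y, φ y ∂Measure.pi μ) (∑ i, ‖c i‖₊ ^ 2)
      (Measure.pi μ) := by
  induction n with
  | zero =>
    rw [Finset.univ_eq_empty, Finset.sum_empty]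
    convert HasSubgaussianMGF.fun_zero (μ := Measure.pi μ) using 2 with x
    rw [Measure.pi_of_empty, integral_dirac, Subsingleton.elim x, sub_self]
  | succ n ih =>
    set g := fun y : ∀ i : Fin n, X i.succ => ∫ z, φ (Fin.cons z y) ∂μ 0
    have hcons := measurePreserving_finCons μ
    have hg : Measurable g :=
      (hφ.comp measurable_finCons).stronglyMeasurable.integral_prod_left'.measurable
    have hmean : ∫ x, φ x ∂Measure.pi μ = ∫ y, g y ∂Measure.pi fun i : Fin n => μ i.succ :=
      integral_pi_eq_integral_integral_finCons μ (h.integrable hφ.aestronglyMeasurable)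
    have hsum := HasSubgaussianMGF.add_prod (W := fun p => φ (Fin.cons p.1 p.2) - g p.2)
      ((hφ.comp measurable_finCons).sub (hg.comp measurable_snd)).aemeasurable
      (h.hasSubgaussianMGF_cons_sub_integral hφ) (ih (fun i => μ i.succ) hg (h.integral_cons hφ))
    rw [hmean, Fin.sum_univ_succ, ← hcons.map_eq]
    refine HasSubgaussianMGF.map hcons.measurable.aemeasurable
      (hφ.sub measurable_const).aemeasurable ?_
    convert hsum using 2 with p
    exact (sub_add_sub_cancel _ _ _).symm

/-- One-sided bounded differences (McDiarmid-type) concentration inequality: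
if `φ` changes by at most `c i` when only coordinate `i` changes and `∑ i, c i ^ 2 ≤ v`,
then for i.i.d. coordinates the upper deviation of `φ` from its mean exceeds `t`
with probability at most `exp (-t² / (2 v))`. -/
theorem bounded_differences_inequality {X : Type*} [MeasurableSpace X] (m : ℕ)
    (μ : Measure X) [IsProbabilityMeasure μ]
    (φ : (Fin m → X) → ℝ) (hφ : Measurable φ)
    (c : Fin m → ℝ)
    (hdiff : ∀ (x : Fin m → X) (i : Fin m) (x' : X),
      |φ x - φ (Function.update x i x')| ≤ c i)
    (v : ℝ) (hv : 0 < v) (hc : ∑ i, c i ^ 2 ≤ v)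
    (t : ℝ) (ht : 0 ≤ t) :
    (Measure.pi fun _ : Fin m => μ)
        {x | φ x - ∫ y, φ y ∂(Measure.pi fun _ : Fin m => μ) ≥ t}
      ≤ ENNReal.ofReal (exp (-t ^ 2 / (2 * v))) := by
  have hsub := hasSubgaussianMGF_sub_integral_pi (fun _ => μ) hφ hdiff
  have hcv : ∑ i, ‖c i‖₊ ^ 2 ≤ v.toNNReal := by
    rw [← NNReal.coe_le_coe, Real.coe_toNNReal _ hv.le]
    push_cast
    simpa only [coe_nnnorm, Real.norm_eq_abs, sq_abs] using hc
  have htail := (hsub.mono hcv).measure_ge_le ht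
  rw [Real.coe_toNNReal _ hv.le] at htail
  exact (ENNReal.le_ofReal_iff_toReal_le (measure_ne_top _ _) (exp_pos _).le).2 htail
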